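/- arXiv:1905.00113 — 2 statements merged into one kernel-verified Lean document; each statement's English description precedes it below -/
import Mathlib

section
/- Let Φ be a frame for H with lower bound m_Φ, and suppose the sequence Ψ satisfies Σₙ ‖φₙ − ψₙ‖² =: q < ∞ and q₀ := Σₙ ‖φₙ − ψₙ‖ · ‖S_Φ⁻¹ φₙ‖ < 1. Then Ψ is a frame for H with lower bound m_Φ(1 − q₀)² and upper bound M_Φ(1 + √(q/M_Φ))². -/
open ContinuousLinearMap MeasureTheory
open scoped InnerProductSpace ComplexConjugate

noncomputable section

notation "ℓ²" => lp (fun _ : ℕ => ℂ) 2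

variable {H : Type} [NormedAddCommGroup H] [InnerProductSpace ℂ H] [CompleteSpace H]

/-- `Φ = (φₙ)` is a frame for `H` with lower bound `m` and upper bound `M`. -/
def IsFrame (φ : ℕ → H) (m M : ℝ) : Prop :=
  0 < m ∧ 0 < M ∧ ∀ f : H,
    m * ‖f‖ ^ 2 ≤ ∑' n, ‖(inner ℂ (φ n) f : ℂ)‖ ^ 2 ∧
    ∑' n, ‖(inner ℂ (φ n) f : ℂ)‖ ^ 2 ≤ M * ‖f‖ ^ 2

/-- `Φ = (φₙ)` is a Bessel sequence with bound `M`. -/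
def IsBessel (φ : ℕ → H) (M : ℝ) : Prop :=
  0 < M ∧ ∀ f : H, ∑' n, ‖(inner ℂ (φ n) f : ℂ)‖ ^ 2 ≤ M * ‖f‖ ^ 2

/-- `U` is the analysis operator of the sequence `Φ = (φₙ)`, i.e. `U f = (⟨f, φₙ⟩)ₙ`. -/
def IsAnalysis (φ : ℕ → H) (U : H →L[ℂ] ℓ²) : Prop :=
  ∀ (f : H) (n : ℕ), U f n = (inner ℂ (φ n) f : ℂ)

/-- Orthogonal projection onto a closed submodule, as an endomorphism. -/
def orthProj {E : Type} [NormedAddCommGroup E] [InnerProductSpace ℂ E] [CompleteSpace E]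
    (K : Submodule ℂ E) (hK : IsClosed (K : Set E)) : E →L[ℂ] E :=
  haveI := hK.completeSpace_coe
  K.subtypeL.comp K.orthogonalProjection

/-- Orthogonal projection onto a closed submodule, with values in the submodule. -/
def orthProjTo {E : Type} [NormedAddCommGroup E] [InnerProductSpace ℂ E] [CompleteSpace E]
    (K : Submodule ℂ E) (hK : IsClosed (K : Set E)) : E →L[ℂ] K :=
  haveI := hK.completeSpace_coe
  K.orthogonalProjection

/-- The gap `δ(X, Y) = ‖(Id - P_Y)|_X‖` from `X` to a closed subspace `Y`. -/
def gap {E : Type} [NormedAddCommGroup E] [InnerProductSpace ℂ E] [CompleteSpace E]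
    (X Y : Submodule ℂ E) (hY : IsClosed (Y : Set E)) : ℝ :=
  ‖(ContinuousLinearMap.id ℂ E - orthProj Y hY).comp X.subtypeL‖

/-!
The analysis operator of `Ψ` is `U_Φ - V`, where `V` is the analysis operator of the differences
`φₙ - ψₙ`, of norm at most `√q`; the triangle inequality gives the upper bound. For the lower bound,
`S_Φ⁻¹ T_Φ (U_Φ - V) = I - E` with `E f = ∑ₙ ⟨f, φₙ - ψₙ⟩ S_Φ⁻¹ φₙ` of norm at most `q₀`, while
`‖S_Φ⁻¹ T_Φ‖ = ‖U_Φ S_Φ⁻¹‖ ≤ 1 / √m_Φ`. Hence `(1 - q₀) ‖f‖ ≤ ‖(U_Φ - V) f‖ / √m_Φ`.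
-/

lemma IsSelfAdjoint.of_mul_eq_one {A : Type*} [Monoid A] [StarMul A] {s r : A}
    (hs : IsSelfAdjoint s) (h : s * r = 1) : IsSelfAdjoint r :=
  left_inv_eq_right_inv (by rw [← hs.star_eq, ← star_mul, h, star_one]) h

lemma IsSelfAdjoint.mul_eq_one_symm {A : Type*} [Monoid A] [StarMul A] {s r : A}
    (hs : IsSelfAdjoint s) (h : s * r = 1) : r * s = 1 := by
  rw [← (hs.of_mul_eq_one h).star_eq, ← hs.star_eq, ← star_mul, h, star_one]

section InverseOfAdjointCompSelf

variable {𝕜 E F : Type*} [RCLike 𝕜] [NormedAddCommGroup E] [InnerProductSpace 𝕜 E]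
  [CompleteSpace E] [NormedAddCommGroup F] [InnerProductSpace 𝕜 F] [CompleteSpace F]
  {U : E →L[𝕜] F} {R : E →L[𝕜] E} {m : ℝ}

lemma isSelfAdjoint_adjoint_comp_self (U : E →L[𝕜] F) : IsSelfAdjoint (adjoint U ∘L U) := by
  rw [isSelfAdjoint_iff', adjoint_comp, adjoint_adjoint]

lemma norm_sq_apply_le_of_adjoint_comp_self_comp_eq_id
    (hR : (adjoint U ∘L U) ∘L R = .id 𝕜 E) (g : E) :
    ‖U (R g)‖ ^ 2 ≤ ‖R g‖ * ‖g‖ := by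
  have hg : (adjoint U ∘L U) (R g) = g := by simpa using congr($hR g)
  rw [apply_norm_sq_eq_inner_adjoint_right, hg]
  exact (RCLike.re_le_norm _).trans (norm_inner_le_norm _ _)

lemma mul_norm_le_of_adjoint_comp_self_comp_eq_id (hU : ∀ x, m * ‖x‖ ^ 2 ≤ ‖U x‖ ^ 2)
    (hR : (adjoint U ∘L U) ∘L R = .id 𝕜 E) (g : E) :
    m * ‖R g‖ ≤ ‖g‖ := by
  rcases (norm_nonneg (R g)).eq_or_lt with h0 | hpos
  · rw [← h0, mul_zero]; exact norm_nonneg g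
  · refine le_of_mul_le_mul_right ?_ hpos
    calc m * ‖R g‖ * ‖R g‖ = m * ‖R g‖ ^ 2 := by ring
      _ ≤ ‖U (R g)‖ ^ 2 := hU (R g)
      _ ≤ ‖g‖ * ‖R g‖ := by
        rw [mul_comm]; exact norm_sq_apply_le_of_adjoint_comp_self_comp_eq_id hR g

lemma sqrt_mul_norm_apply_adjoint_apply_le (hm : 0 < m)
    (hU : ∀ x, m * ‖x‖ ^ 2 ≤ ‖U x‖ ^ 2) (hR : (adjoint U ∘L U) ∘L R = .id 𝕜 E)
    (hRs : IsSelfAdjoint R) (c : F) :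
    √m * ‖R (adjoint U c)‖ ≤ ‖c‖ := by
  have hUR : ∀ g, ‖(U ∘L R) g‖ ≤ (√m)⁻¹ * ‖g‖ := fun g => by
    have hsq : m * ‖U (R g)‖ ^ 2 ≤ ‖g‖ ^ 2 :=
      calc m * ‖U (R g)‖ ^ 2 ≤ m * ‖R g‖ * ‖g‖ := by
            rw [mul_assoc]; gcongr
            exact norm_sq_apply_le_of_adjoint_comp_self_comp_eq_id hR g
        _ ≤ ‖g‖ * ‖g‖ := by
            gcongr; exact mul_norm_le_of_adjoint_comp_self_comp_eq_id hU hR g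
        _ = ‖g‖ ^ 2 := (sq _).symm
    rw [← pow_le_pow_iff_left₀ (norm_nonneg _) (by positivity) two_ne_zero, mul_pow,
      inv_pow, Real.sq_sqrt hm.le, comp_apply, inv_mul_eq_div, le_div_iff₀ hm, mul_comm]
    exact hsq
  have hnorm : ‖R ∘L adjoint U‖ ≤ (√m)⁻¹ := by
    rw [← hRs.adjoint_eq, ← adjoint_comp, LinearIsometryEquiv.norm_map]
    exact opNorm_le_bound _ (by positivity) hUR
  calc √m * ‖(R ∘L adjoint U) c‖ ≤ √m * ((√m)⁻¹ * ‖c‖) := by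
        gcongr; exact le_of_opNorm_le _ hnorm c
    _ = ‖c‖ := by field_simp

end InverseOfAdjointCompSelf

lemma lp_two_norm_sq_eq_tsum (u : ℓ²) : ‖u‖ ^ 2 = ∑' n, ‖u n‖ ^ 2 := by
  simpa using lp.norm_rpow_eq_tsum (p := 2) (by norm_num) u

section AnalysisOperator

variable {E : Type} [NormedAddCommGroup E] [InnerProductSpace ℂ E]

lemma exists_isAnalysis_of_summable_norm_sq {δ : ℕ → E} (hδ : Summable fun n => ‖δ n‖ ^ 2) :
    ∃ V : E →L[ℂ] ℓ², IsAnalysis δ V ∧ ∀ f, ‖V f‖ ≤ √(∑' n, ‖δ n‖ ^ 2) * ‖f‖ := by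
  have hle : ∀ f n, ‖⟪δ n, f⟫_ℂ‖ ^ 2 ≤ ‖δ n‖ ^ 2 * ‖f‖ ^ 2 := fun f n => by
    rw [← mul_pow]; gcongr; exact norm_inner_le_norm _ _
  have hsum : ∀ f, Summable fun n => ‖⟪δ n, f⟫_ℂ‖ ^ 2 := fun f =>
    (hδ.mul_right _).of_nonneg_of_le (fun n => by positivity) (hle f)
  let A : E →ₗ[ℂ] ℓ² :=
    { toFun := fun f => ⟨fun n => ⟪δ n, f⟫_ℂ, memℓp_gen (by simpa using hsum f)⟩
      map_add' := fun f g => lp.ext <| funext fun n => inner_add_right _ _ _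
      map_smul' := fun a f => lp.ext <| funext fun n => inner_smul_right _ _ _ }
  have hA : ∀ f, ‖A f‖ ≤ √(∑' n, ‖δ n‖ ^ 2) * ‖f‖ := fun f => by
    rw [← Real.sqrt_sq (norm_nonneg (A f)), ← Real.sqrt_sq (norm_nonneg f),
      ← Real.sqrt_mul (tsum_nonneg fun n => by positivity), ← tsum_mul_right,
      lp_two_norm_sq_eq_tsum]
    exact Real.sqrt_le_sqrt ((hsum f).tsum_le_tsum (hle f) (hδ.mul_right _))
  exact ⟨A.mkContinuous _ hA, fun f n => rfl, hA⟩

namespace IsAnalysis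

variable {φ δ : ℕ → E} {U V : E →L[ℂ] ℓ²}

lemma norm_sq_apply (hU : IsAnalysis φ U) (f : E) :
    ‖U f‖ ^ 2 = ∑' n, ‖⟪φ n, f⟫_ℂ‖ ^ 2 := by
  simp only [lp_two_norm_sq_eq_tsum, hU f]

lemma isFrame_iff (hU : IsAnalysis φ U) {m M : ℝ} (hm : 0 < m) (hM : 0 < M) :
    IsFrame φ m M ↔ ∀ f, √m * ‖f‖ ≤ ‖U f‖ ∧ ‖U f‖ ≤ √M * ‖f‖ := by
  have hsq : ∀ {a : ℝ}, 0 < a → ∀ f : E, a * ‖f‖ ^ 2 = (√a * ‖f‖) ^ 2 := fun ha f => by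
    rw [mul_pow, Real.sq_sqrt ha.le]
  simp only [IsFrame, hm, hM, true_and, ← hU.norm_sq_apply, hsq hm, hsq hM]
  refine forall_congr' fun f => and_congr ?_ ?_ <;>
    exact pow_le_pow_iff_left₀ (by positivity) (by positivity) two_ne_zero

lemma sub (hU : IsAnalysis φ U) (hV : IsAnalysis δ V) :
    IsAnalysis (fun n => φ n - δ n) (U - V) := by
  intro f n
  simp [hU f n, hV f n]

variable [CompleteSpace E]

lemma adjoint_single (hU : IsAnalysis φ U) (n : ℕ) (a : ℂ) :
    adjoint U (lp.single 2 n a) = a • φ n := by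
  refine ext_inner_left ℂ fun g => ?_
  rw [adjoint_inner_right, lp.inner_single_right, hU, inner_smul_right, RCLike.inner_apply,
    inner_conj_symm, mul_comm]

lemma hasSum_adjoint (hU : IsAnalysis φ U) (c : ℓ²) :
    HasSum (fun n => c n • φ n) (adjoint U c) := by
  simpa only [hU.adjoint_single] using (lp.hasSum_single ENNReal.ofNat_ne_top c).mapL (adjoint U)

variable {R : E →L[ℂ] E}

lemma norm_apply_adjoint_apply_le (hU : IsAnalysis φ U) (hV : IsAnalysis δ V)
    (hs : Summable fun n => ‖δ n‖ * ‖R (φ n)‖) (f : E) :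
    ‖R (adjoint U (V f))‖ ≤ (∑' n, ‖δ n‖ * ‖R (φ n)‖) * ‖f‖ := by
  have hsum : HasSum (fun n => V f n • R (φ n)) (R (adjoint U (V f))) := by
    simpa only [map_smul] using (hU.hasSum_adjoint (V f)).mapL R
  rw [← tsum_mul_right]
  refine hsum.norm_le_of_bounded (hs.mul_right _).hasSum fun n => ?_
  calc ‖V f n • R (φ n)‖ = ‖⟪δ n, f⟫_ℂ‖ * ‖R (φ n)‖ := by rw [norm_smul, hV]
    _ ≤ ‖δ n‖ * ‖f‖ * ‖R (φ n)‖ := by gcongr; exact norm_inner_le_norm _ _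
    _ = ‖δ n‖ * ‖R (φ n)‖ * ‖f‖ := by ring

lemma sqrt_mul_le_norm_sub_apply {m M : ℝ} (hΦ : IsFrame φ m M) (hU : IsAnalysis φ U)
    (hV : IsAnalysis δ V) (hR : (adjoint U ∘L U) ∘L R = .id ℂ E) (hRs : IsSelfAdjoint R)
    (hs : Summable fun n => ‖δ n‖ * ‖R (φ n)‖) (f : E) :
    √m * ((1 - ∑' n, ‖δ n‖ * ‖R (φ n)‖) * ‖f‖) ≤ ‖(U - V) f‖ := by
  have hlow : ∀ x, m * ‖x‖ ^ 2 ≤ ‖U x‖ ^ 2 := fun x => hU.norm_sq_apply x ▸ (hΦ.2.2 x).1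
  have hRU : R ((adjoint U ∘L U) f) = f :=
    congr($((isSelfAdjoint_adjoint_comp_self U).mul_eq_one_symm hR) f)
  have hid : R (adjoint U ((U - V) f)) = f - R (adjoint U (V f)) := by
    rw [sub_apply, map_sub, map_sub, ← comp_apply (adjoint U), hRU]
  calc √m * ((1 - ∑' n, ‖δ n‖ * ‖R (φ n)‖) * ‖f‖)
      ≤ √m * (‖f‖ - ‖R (adjoint U (V f))‖) := by
        gcongr; linarith [hU.norm_apply_adjoint_apply_le hV hs f]
    _ ≤ √m * ‖R (adjoint U ((U - V) f))‖ := by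
        rw [hid]; gcongr; exact norm_sub_norm_le _ _
    _ ≤ ‖(U - V) f‖ := sqrt_mul_norm_apply_adjoint_apply_le hΦ.1 hlow hR hRs _

end IsAnalysis

end AnalysisOperator

theorem stmt2_general
    (φ ψ : ℕ → H) (mΦ MΦ q q0 : ℝ)
    (UΦ : H →L[ℂ] ℓ²) (TΦ : ℓ² →L[ℂ] H) (SΦ SΦinv : H →L[ℂ] H)
    (hUΦ : IsAnalysis φ UΦ) (hTΦ : TΦ = adjoint UΦ) (hSΦ : SΦ = TΦ ∘L UΦ)
    (hinv1 : SΦ ∘L SΦinv = ContinuousLinearMap.id ℂ H)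
    (hΦ : IsFrame φ mΦ MΦ)
    (hqs : Summable fun n => ‖φ n - ψ n‖ ^ 2)
    (hq : q = ∑' n, ‖φ n - ψ n‖ ^ 2)
    (hq0s : Summable fun n => ‖φ n - ψ n‖ * ‖SΦinv (φ n)‖)
    (hq0 : q0 = ∑' n, ‖φ n - ψ n‖ * ‖SΦinv (φ n)‖)
    (hq0lt : q0 < 1) :
    IsFrame ψ (mΦ * (1 - q0) ^ 2) (MΦ * (1 + Real.sqrt (q / MΦ)) ^ 2) := by
  subst hTΦ hSΦ hq hq0
  have hm : 0 < mΦ := hΦ.1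
  have hM : 0 < MΦ := hΦ.2.1
  obtain ⟨V, hV, hVle⟩ := exists_isAnalysis_of_summable_norm_sq hqs
  have hψ : IsAnalysis ψ (UΦ - V) := by simpa using hUΦ.sub hV
  have hRs : IsSelfAdjoint SΦinv := (isSelfAdjoint_adjoint_comp_self UΦ).of_mul_eq_one hinv1
  have h1q0 : 0 < 1 - ∑' n, ‖φ n - ψ n‖ * ‖SΦinv (φ n)‖ := sub_pos.2 hq0lt
  rw [hψ.isFrame_iff (by positivity) (by positivity), Real.sqrt_mul hm.le,
    Real.sqrt_sq h1q0.le, Real.sqrt_mul hM.le, Real.sqrt_sq (by positivity)]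
  intro f
  constructor
  · rw [mul_assoc]
    exact hUΦ.sqrt_mul_le_norm_sub_apply hΦ hV hinv1 hRs hq0s f
  · have hUf := (((hUΦ.isFrame_iff hm hM).1 hΦ) f).2
    calc ‖(UΦ - V) f‖ ≤ ‖UΦ f‖ + ‖V f‖ := norm_sub_le _ _
      _ ≤ √MΦ * ‖f‖ + √(∑' n, ‖φ n - ψ n‖ ^ 2) * ‖f‖ := add_le_add hUf (hVle f)
      _ = √MΦ * (1 + √((∑' n, ‖φ n - ψ n‖ ^ 2) / MΦ)) * ‖f‖ := by
        rw [mul_one_add, ← Real.sqrt_mul hM.le, mul_div_cancel₀ _ hM.ne', add_mul]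

theorem stmt2
    (φ ψ : ℕ → H) (mΦ MΦ q q0 : ℝ)
    (UΦ : H →L[ℂ] ℓ²) (TΦ : ℓ² →L[ℂ] H) (SΦ SΦinv : H →L[ℂ] H)
    (hUΦ : IsAnalysis φ UΦ) (hTΦ : TΦ = adjoint UΦ) (hSΦ : SΦ = TΦ ∘L UΦ)
    (hinv1 : SΦ ∘L SΦinv = ContinuousLinearMap.id ℂ H)
    (hinv2 : SΦinv ∘L SΦ = ContinuousLinearMap.id ℂ H)
    (hΦ : IsFrame φ mΦ MΦ)
    (hqs : Summable fun n => ‖φ n - ψ n‖ ^ 2)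
    (hq : q = ∑' n, ‖φ n - ψ n‖ ^ 2)
    (hq0s : Summable fun n => ‖φ n - ψ n‖ * ‖SΦinv (φ n)‖)
    (hq0 : q0 = ∑' n, ‖φ n - ψ n‖ * ‖SΦinv (φ n)‖)
    (hq0lt : q0 < 1) :
    IsFrame ψ (mΦ * (1 - q0) ^ 2) (MΦ * (1 + Real.sqrt (q / MΦ)) ^ 2) :=
  stmt2_general φ ψ mΦ MΦ q q0 UΦ TΦ SΦ SΦinv hUΦ hTΦ hSΦ hinv1 hΦ hqs hq hq0s hq0 hq0lt

end
end

section
/- If Φ = (B eₙ)ₙ is a Riesz basis of H for a bounded bijective operator B ∈ B(H) and orthonormal basis (eₙ), then every approximately dual frame of Φ is of the form (A* (B*)⁻¹ eₙ)ₙ for some A ∈ B(H) with ‖Id − A‖ < 1; in particular every approximately dual frame of a Riesz basis is again a Riesz basis. -/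
open ContinuousLinearMap MeasureTheory
open scoped InnerProductSpace ComplexConjugate

noncomputable section

variable {H : Type} [NormedAddCommGroup H] [InnerProductSpace ℂ H] [CompleteSpace H]

/- Take `A := T_Φ U_Ψ`. The analysis operator `U_Φ` maps the dual Riesz basis `(B*)⁻¹ eₙ` to the
unit vector `δₙ` (biorthogonality), and `U_Ψ*` maps `δₙ` to `ψₙ`; hence `ψₙ = A* (B*)⁻¹ eₙ`.
Since `‖Id - A‖ < 1`, the Neumann series makes `A` invertible, hence so is `A* (B*)⁻¹ = (B⁻¹ A)*`. -/

theorem IsAnalysis.adjoint_single_s8 {ψ : ℕ → H} {U : H →L[ℂ] ℓ²} (hU : IsAnalysis ψ U) (n : ℕ) :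
    adjoint U (lp.single 2 n 1) = ψ n := by
  refine ext_inner_right ℂ fun f => ?_
  rw [adjoint_inner_left, lp.inner_single_left, hU f n]
  simp

theorem inner_apply_adjoint_of_comp_eq_id {ι : Type*} [DecidableEq ι] {e : ι → H}
    (he : Orthonormal ℂ e) {B Binv : H →L[ℂ] H} (hB : Binv ∘L B = ContinuousLinearMap.id ℂ H)
    (k n : ι) :
    inner ℂ (B (e k)) (adjoint Binv (e n)) = if k = n then 1 else 0 := by
  rw [adjoint_inner_right, ← comp_apply, hB, id_apply, orthonormal_iff_ite.mp he]

theorem IsAnalysis.apply_adjoint_eq_single {e : ℕ → H} (he : Orthonormal ℂ e)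
    {B Binv : H →L[ℂ] H} (hB : Binv ∘L B = ContinuousLinearMap.id ℂ H) {φ : ℕ → H}
    (hφ : ∀ k, φ k = B (e k)) {U : H →L[ℂ] ℓ²} (hU : IsAnalysis φ U) (n : ℕ) :
    U (adjoint Binv (e n)) = lp.single 2 n 1 := by
  ext k
  rw [hU, hφ, inner_apply_adjoint_of_comp_eq_id he hB, lp.single_apply, Pi.single_apply]

theorem bijective_adjoint_of_isUnit {𝕜 E : Type*} [RCLike 𝕜] [NormedAddCommGroup E]
    [InnerProductSpace 𝕜 E] [CompleteSpace E] {T : E →L[𝕜] E} (hT : IsUnit T) :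
    Function.Bijective (adjoint T) := by
  rw [← star_eq_adjoint]
  exact isUnit_iff_bijective.mp hT.star

theorem stmt8_general
    (e : HilbertBasis ℕ ℂ H) (B Binv : H →L[ℂ] H)
    (hB1 : B ∘L Binv = ContinuousLinearMap.id ℂ H)
    (hB2 : Binv ∘L B = ContinuousLinearMap.id ℂ H)
    (φ ψ : ℕ → H) (hφ : ∀ n, φ n = B (e n))
    (UΦ Uψ : H →L[ℂ] ℓ²) (TΦ : ℓ² →L[ℂ] H)
    (hUΦ : IsAnalysis φ UΦ) (hUψ : IsAnalysis ψ Uψ) (hTΦ : TΦ = adjoint UΦ)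
    (hdual : ‖ContinuousLinearMap.id ℂ H - TΦ ∘L Uψ‖ < 1) :
    ∃ A : H →L[ℂ] H, ‖ContinuousLinearMap.id ℂ H - A‖ < 1 ∧
      (∀ n, ψ n = adjoint A (adjoint Binv (e n))) ∧
      Function.Bijective (adjoint A ∘L adjoint Binv) := by
  refine ⟨TΦ ∘L Uψ, hdual, fun n => ?_, ?_⟩
  · rw [hTΦ, adjoint_comp, adjoint_adjoint, comp_apply,
      hUΦ.apply_adjoint_eq_single e.orthonormal hB2 hφ, hUψ.adjoint_single_s8]
  · have hA : IsUnit (TΦ ∘L Uψ) :=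
      sub_sub_cancel 1 (TΦ ∘L Uψ) ▸ isUnit_one_sub_of_norm_lt_one hdual
    have hBinv : IsUnit Binv := ⟨⟨Binv, B, hB2, hB1⟩, rfl⟩
    rw [← adjoint_comp]
    exact bijective_adjoint_of_isUnit (hBinv.mul hA)

theorem stmt8
    (e : HilbertBasis ℕ ℂ H) (B Binv : H →L[ℂ] H)
    (hB1 : B ∘L Binv = ContinuousLinearMap.id ℂ H)
    (hB2 : Binv ∘L B = ContinuousLinearMap.id ℂ H)
    (φ ψ : ℕ → H) (hφ : ∀ n, φ n = B (e n)) (mΦ MΦ MΨ : ℝ)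
    (hΦ : IsFrame φ mΦ MΦ) (hΨ : IsBessel ψ MΨ)
    (UΦ Uψ : H →L[ℂ] ℓ²) (TΦ : ℓ² →L[ℂ] H)
    (hUΦ : IsAnalysis φ UΦ) (hUψ : IsAnalysis ψ Uψ) (hTΦ : TΦ = adjoint UΦ)
    (hdual : ‖ContinuousLinearMap.id ℂ H - TΦ ∘L Uψ‖ < 1) :
    ∃ A : H →L[ℂ] H, ‖ContinuousLinearMap.id ℂ H - A‖ < 1 ∧
      (∀ n, ψ n = adjoint A (adjoint Binv (e n))) ∧
      Function.Bijective (adjoint A ∘L adjoint Binv) :=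
  stmt8_general e B Binv hB1 hB2 φ ψ hφ UΦ Uψ TΦ hUΦ hUψ hTΦ hdual

end
end
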